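/- Independence of disequations: let C be a solved deducibility constraint system and let t1 ≠ u1, ..., tn ≠ un be disequations between terms whose variables are contained in V(C), such that for every i the terms ti and ui are not syntactically identical. Then there exists a solution θ of C such that tiθ ≠ uiθ for every i. -/

import Mathlib

open scoped Classical

/-- Terms built from names, variables, pairing, symmetric/asymmetric encryption,
signatures and private keys. -/
inductive Tm where
  | var : ℕ → Tm
  | name : ℕ → Tm
  | pair : Tm → Tm → Tm
  | enc : Tm → Tm → Tm
  | enca : Tm → Tm → Tm
  | sign : Tm → Tm → Tm
  | priv : Tm → Tm
deriving DecidableEq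

namespace Tm

/-- The variables of a term. -/
def vars : Tm → Finset ℕ
  | var x => {x}
  | name _ => ∅
  | pair s t => s.vars ∪ t.vars
  | enc s t => s.vars ∪ t.vars
  | enca s t => s.vars ∪ t.vars
  | sign s t => s.vars ∪ t.vars
  | priv t => t.vars

/-- The subterms of a term. -/
def subterms : Tm → Finset Tm
  | var x => {var x}
  | name a => {name a}
  | pair s t => insert (pair s t) (s.subterms ∪ t.subterms)
  | enc s t => insert (enc s t) (s.subterms ∪ t.subterms)
  | enca s t => insert (enca s t) (s.subterms ∪ t.subterms)
  | sign s t => insert (sign s t) (s.subterms ∪ t.subterms)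
  | priv t => insert (priv t) t.subterms

/-- A term is a variable. -/
def IsVar : Tm → Prop
  | var _ => True
  | _ => False

end Tm

/-- The Dolev-Yao deduction relation `T ⊢ u`. -/
inductive Deduce : Finset Tm → Tm → Prop where
  | ax {T u} : u ∈ T → Deduce T u
  | pairI {T x y} : Deduce T x → Deduce T y → Deduce T (Tm.pair x y)
  | encI {T x y} : Deduce T x → Deduce T y → Deduce T (Tm.enc x y)
  | encaI {T x y} : Deduce T x → Deduce T y → Deduce T (Tm.enca x y)
  | signI {T x y} : Deduce T x → Deduce T y → Deduce T (Tm.sign x y)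
  | encE {T x y} : Deduce T (Tm.enc x y) → Deduce T y → Deduce T x
  | encaE {T x y} : Deduce T (Tm.enca x y) → Deduce T (Tm.priv y) → Deduce T x
  | fstE {T x y} : Deduce T (Tm.pair x y) → Deduce T x
  | sndE {T x y} : Deduce T (Tm.pair x y) → Deduce T y

/-- Substitutions. -/
def Subst := ℕ → Tm

/-- Applying a substitution to a term. -/
def Tm.subst (σ : Subst) : Tm → Tm
  | .var x => σ x
  | .name a => .name a
  | .pair s t => .pair (s.subst σ) (t.subst σ)
  | .enc s t => .enc (s.subst σ) (t.subst σ)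
  | .enca s t => .enca (s.subst σ) (t.subst σ)
  | .sign s t => .sign (s.subst σ) (t.subst σ)
  | .priv t => .priv (t.subst σ)

/-- The identity substitution. -/
def idSubst : Subst := Tm.var

/-- Composition of substitutions: `σ.comp τ` applies `σ` first, then `τ`. -/
def Subst.comp (σ τ : Subst) : Subst := fun x => (σ x).subst τ

/-- The variables of a finite set of terms. -/
def setVars (T : Finset Tm) : Finset ℕ := T.sup Tm.vars

/-- The subterms of a finite set of terms. -/
def stSet (T : Finset Tm) : Finset Tm := T.sup Tm.subterms

/-- A deducibility constraint `T ⊩ u`: a (nonempty) finite set of terms and a term. -/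
abbrev Cst := Finset Tm × Tm

/-- Applying a substitution to a constraint. -/
def conSubst (σ : Subst) (c : Cst) : Cst := (c.1.image (Tm.subst σ), c.2.subst σ)

/-- Applying a substitution to a constraint system. -/
def csSubst (σ : Subst) (S : Finset Cst) : Finset Cst := S.image (conSubst σ)

/-- The variables of a constraint system. -/
def sysVars (C : Finset Cst) : Finset ℕ := C.sup (fun c => setVars c.1 ∪ c.2.vars)

/-- The set `{x | (T' ⊩ x) ∈ S, T' ⊊ T}` of variables (as terms) occurring as
right-hand sides of constraints of `S` whose left-hand side is strictly contained in `T`. -/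
noncomputable def extraVars (S : Finset Cst) (T : Finset Tm) : Finset Tm :=
  (S.filter (fun c => c.1 ⊂ T ∧ c.2.IsVar)).image Prod.snd

/-- `C` is a deducibility constraint system: left-hand sides are nonempty,
totally ordered by inclusion, and every variable of a left-hand side `T` occurs in
the right-hand side of a constraint whose left-hand side is minimal among those whose
right-hand side contains the variable, and strictly included in `T`. -/
def IsCS (C : Finset Cst) : Prop :=
  (∀ c ∈ C, c.1.Nonempty) ∧
  (∀ c ∈ C, ∀ c' ∈ C, c.1 ⊆ c'.1 ∨ c'.1 ⊆ c.1) ∧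
  (∀ c ∈ C, ∀ x ∈ setVars c.1,
    ∃ c' ∈ C, x ∈ c'.2.vars ∧ c'.1 ⊂ c.1 ∧
      ∀ c'' ∈ C, x ∈ c''.2.vars → c'.1 ⊆ c''.1)

/-- A solution of a constraint system: a ground substitution whose domain is `V(C)`
such that `Tθ ⊢ uθ` for every constraint `(T ⊩ u) ∈ C`. -/
def IsSolution (θ : Subst) (C : Finset Cst) : Prop :=
  (∀ x ∈ sysVars C, (θ x).vars = ∅) ∧
  (∀ x, x ∉ sysVars C → θ x = Tm.var x) ∧
  (∀ c ∈ C, Deduce (c.1.image (Tm.subst θ)) (c.2.subst θ))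

/-- A (non-`⊥`) constraint system is solved if all right-hand sides are variables. -/
def Solved (C : Finset Cst) : Prop := ∀ c ∈ C, c.2.IsVar

/-- `σ` is a most general unifier of `t` and `u`. -/
def IsMGU (σ : Subst) (t u : Tm) : Prop :=
  t.subst σ = u.subst σ ∧
  (∀ x, x ∉ t.vars ∪ u.vars → σ x = Tm.var x) ∧
  (∀ x, (σ x).vars ⊆ t.vars ∪ u.vars) ∧
  (∀ δ : Subst, t.subst δ = u.subst δ → ∃ ρ : Subst, ∀ x, δ x = (σ x).subst ρ)

/-- The binary constructors `pair`, `enc`, `enca`, `sign`. -/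
inductive BinOp where
  | pair | enc | enca | sign

def BinOp.app : BinOp → Tm → Tm → Tm
  | .pair => Tm.pair
  | .enc => Tm.enc
  | .enca => Tm.enca
  | .sign => Tm.sign

/-- One step of simplification `C ⇝_σ C'` (result `none` represents `⊥`),
given by the rules R1, R2, R3, R3', R4, Rf. -/
inductive Step : Finset Cst → Subst → Option (Finset Cst) → Prop where
  | r1 {S : Finset Cst} {T : Finset Tm} {u : Tm} :
      (T, u) ∈ S →
      Deduce (T ∪ extraVars (S.erase (T, u)) T) u →
      Step S idSubst (some (S.erase (T, u)))
  | r2 {S : Finset Cst} {T : Finset Tm} {u t : Tm} {σ : Subst} :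
      (T, u) ∈ S → t ∈ stSet T → ¬ t.IsVar → ¬ u.IsVar → t ≠ u →
      IsMGU σ t u →
      Step S σ (some (csSubst σ S))
  | r3 {S : Finset Cst} {T : Finset Tm} {u t₁ t₂ : Tm} {σ : Subst} :
      (T, u) ∈ S → t₁ ∈ stSet T → t₂ ∈ stSet T → ¬ t₁.IsVar → ¬ t₂.IsVar →
      t₁ ≠ t₂ → IsMGU σ t₁ t₂ →
      Step S σ (some (csSubst σ S))
  | r3' {S : Finset Cst} {T : Finset Tm} {u t₁ t₂ t₃ : Tm} {σ : Subst} :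
      (T, u) ∈ S → Tm.enca t₁ t₂ ∈ stSet T → Tm.priv t₃ ∈ stSet T →
      t₂ ≠ t₃ → (t₂.IsVar ∨ t₃.IsVar) → IsMGU σ t₂ t₃ →
      Step S σ (some (csSubst σ S))
  | r4 {S : Finset Cst} {T : Finset Tm} {u : Tm} :
      (T, u) ∈ S → setVars T ∪ u.vars = ∅ → ¬ Deduce T u →
      Step S idSubst none
  | rf {S : Finset Cst} {T : Finset Tm} {u v : Tm} (b : BinOp) :
      (T, b.app u v) ∈ S →
      Step S idSubst (some (insert (T, u) (insert (T, v) (S.erase (T, b.app u v)))))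

/-- Sequences of simplification steps `C ⇝*_σ C'`, composing the substitutions. -/
inductive Steps : Finset Cst → Subst → Option (Finset Cst) → Prop where
  | refl (S) : Steps S idSubst (some S)
  | tail {S : Finset Cst} {σ : Subst} {S' : Finset Cst} {τ : Subst} {R} :
      Steps S σ (some S') → Step S' τ R → Steps S (σ.comp τ) R

/-- A security property, identified with its set of solutions (ground substitutions
making it true); `θ` solves `φσ` iff `σθ` solves `φ`. -/
def SecProp := Subst → Prop

/-- The instance `φσ` of a security property `φ` by a substitution `σ`. -/
def SecProp.subst (φ : SecProp) (σ : Subst) : SecProp := fun θ => φ (σ.comp θ)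

/-- `θ` is an attack for `φ` and `C` if it is a solution of both. -/
def IsAttack (θ : Subst) (C : Finset Cst) (φ : SecProp) : Prop :=
  IsSolution θ C ∧ φ θ

/-- One memorizing simplification step: `C;D ⇒_σ (C' \ D); (D ∪ (C \ C'))`. -/
inductive MStep : Finset Cst × Finset Cst → Subst → Finset Cst × Finset Cst → Prop where
  | mk {C D C' : Finset Cst} {σ : Subst} :
      Step C σ (some C') → MStep (C, D) σ (C' \ D, D ∪ (C \ C'))

/-- Sequences of memorizing simplification steps, composing the substitutions. -/
inductive MSteps : Finset Cst × Finset Cst → Subst → Finset Cst × Finset Cst → Prop where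
  | refl (P) : MSteps P idSubst P
  | tail {P : Finset Cst × Finset Cst} {σ : Subst} {Q : Finset Cst × Finset Cst}
      {τ : Subst} {R : Finset Cst × Finset Cst} :
      MSteps P σ Q → MStep Q τ R → MSteps P (σ.comp τ) R

/-!
Let `b` be a ground term of the smallest left-hand side, which is contained in all the
others, and send the variable `x` to the tower of pairs `⟨⋯⟨b, b⟩⋯⟩` of height `N (x + 1)`,
where `N` exceeds the depth of every term in the disequations. Every right-hand side is a
variable and its image is deducible from `b` alone, so this is a solution. If `tθ = uθ` with
`t ≠ u`, comparing them position by position yields a variable `x` and a term `s ≠ x` of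
depth `< N` with `xθ = sθ`. Depth rules this out: if `s` contains some `y ≥ x`, then `sθ` is
at least as deep as `yθ`, strictly so if `y = x` (then `s` is not a variable), hence deeper
than `xθ`; otherwise `sθ` has depth at most `depth s + depth b + N x`, which is below the
depth `depth b + N (x + 1)` of `xθ`.
-/

namespace Tm

def depth : Tm → ℕ
  | var _ => 0
  | name _ => 0
  | pair s t => max s.depth t.depth + 1
  | enc s t => max s.depth t.depth + 1
  | enca s t => max s.depth t.depth + 1
  | sign s t => max s.depth t.depth + 1
  | priv t => t.depth + 1

theorem subst_congr {σ τ : Subst} (t : Tm) (h : ∀ x ∈ t.vars, σ x = τ x) :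
    t.subst σ = t.subst τ := by
  induction t <;> simp_all [subst, vars]

theorem subst_idSubst (t : Tm) : t.subst idSubst = t := by
  induction t <;> simp_all [subst, idSubst]

theorem subst_of_vars_eq_empty {t : Tm} (h : t.vars = ∅) (σ : Subst) : t.subst σ = t := by
  rw [subst_congr (τ := idSubst) t (by simp [h]), subst_idSubst]

theorem depth_le_depth_subst {σ : Subst} {x : ℕ} {t : Tm} (h : x ∈ t.vars) :
    (σ x).depth ≤ (t.subst σ).depth := by
  induction t <;> simp only [vars, Finset.mem_union, Finset.mem_singleton] at h <;>
    grind [subst, depth]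

theorem depth_lt_depth_subst {σ : Subst} {x : ℕ} {t : Tm} (h : x ∈ t.vars) (ht : ¬ t.IsVar) :
    (σ x).depth < (t.subst σ).depth := by
  cases t <;> simp only [vars, Finset.mem_union] at h <;>
    grind [subst, depth, IsVar, depth_le_depth_subst]

theorem depth_subst_le {σ : Subst} {M : ℕ} {t : Tm} (h : ∀ x ∈ t.vars, (σ x).depth ≤ M) :
    (t.subst σ).depth ≤ t.depth + M := by
  induction t <;> grind [subst, depth, vars]

theorem eq_of_subst_eq {σ : Subst} {N : ℕ}
    (hσ : ∀ x s, s.depth < N → σ x = s.subst σ → s = var x) {t u : Tm}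
    (ht : t.depth < N) (hu : u.depth < N) (h : t.subst σ = u.subst σ) : t = u := by
  induction t generalizing u with
  | var x => exact (hσ x u hu h).symm
  | _ =>
    cases u
    case var y => exact hσ y _ ht h.symm
    all_goals simp only [subst, reduceCtorEq, pair.injEq, enc.injEq, enca.injEq, sign.injEq,
      priv.injEq] at h
    all_goals grind [depth]

def tower (b : Tm) : ℕ → Tm
  | 0 => b
  | n + 1 => pair (tower b n) (tower b n)

theorem depth_tower (b : Tm) (n : ℕ) : (tower b n).depth = b.depth + n := by
  induction n <;> simp_all [tower, depth, Nat.add_assoc]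

theorem vars_tower (b : Tm) (n : ℕ) : (tower b n).vars = b.vars := by
  induction n <;> simp_all [tower, vars]

theorem deduce_tower {T : Finset Tm} {b : Tm} (h : Deduce T b) (n : ℕ) :
    Deduce T (tower b n) := by
  induction n with
  | zero => exact h
  | succ n ih => exact Deduce.pairI ih ih

end Tm

open Tm

def towerSubst (b : Tm) (N : ℕ) : Subst := fun x => tower b (N * (x + 1))

theorem depth_towerSubst (b : Tm) (N x : ℕ) : (towerSubst b N x).depth = b.depth + N * (x + 1) :=
  depth_tower b _

theorem eq_var_of_towerSubst_eq_subst {b : Tm} {N x : ℕ} {s : Tm} (hs : s.depth < N)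
    (h : towerSubst b N x = s.subst (towerSubst b N)) : s = var x := by
  by_contra hsx
  have hdepth := congrArg depth h
  by_cases hmax : ∃ y ∈ s.vars, x ≤ y
  · obtain ⟨y, hy, hxy⟩ := hmax
    have : (towerSubst b N x).depth < (s.subst (towerSubst b N)).depth := by
      rcases hxy.lt_or_eq with hlt | rfl
      · calc (towerSubst b N x).depth < (towerSubst b N y).depth := by
              simp only [depth_towerSubst]; nlinarith
          _ ≤ _ := depth_le_depth_subst hy
      · refine depth_lt_depth_subst hy fun hvar => hsx ?_
        cases s <;> simp_all [IsVar, vars]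
    omega
  · push Not at hmax
    have : (s.subst (towerSubst b N)).depth ≤ s.depth + (b.depth + N * x) :=
      depth_subst_le fun y hy => by
        simp only [depth_towerSubst]; have := hmax y hy; nlinarith
    rw [depth_towerSubst] at hdepth
    nlinarith

theorem IsCS.exists_ground_mem_lhs {C : Finset Cst} (hC : IsCS C) :
    ∃ b : Tm, b.vars = ∅ ∧ ∀ c ∈ C, b ∈ c.1 := by
  rcases C.eq_empty_or_nonempty with rfl | hCne
  · exact ⟨name 0, rfl, by simp⟩
  obtain ⟨c₀, hc₀, hcard⟩ := C.exists_min_image (fun c => c.1.card) hCne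
  have hmin : ∀ c ∈ C, c₀.1 ⊆ c.1 := fun c hc =>
    (hC.2.1 c₀ hc₀ c hc).elim id fun h => (Finset.eq_of_subset_of_card_le h (hcard c hc)).ge
  have hground : setVars c₀.1 = ∅ := by
    refine Finset.eq_empty_of_forall_notMem fun x hx => ?_
    obtain ⟨c', hc', -, hlt, -⟩ := hC.2.2 c₀ hc₀ x hx
    exact (hlt.trans_subset (hmin c' hc')).ne rfl
  obtain ⟨b, hb⟩ := hC.1 c₀ hc₀
  exact ⟨b, Finset.subset_empty.mp (hground ▸ Finset.le_sup (f := vars) hb),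
    fun c hc => hmin c hc hb⟩

def Subst.restrict (σ : Subst) (V : Finset ℕ) : Subst := fun x => if x ∈ V then σ x else var x

theorem subst_restrict_of_vars_subset {σ : Subst} {V : Finset ℕ} {t : Tm} (ht : t.vars ⊆ V) :
    t.subst (σ.restrict V) = t.subst σ :=
  subst_congr t fun _ hx => if_pos (ht hx)

theorem isSolution_restrict_towerSubst {C : Finset Cst} (hsolved : Solved C) {b : Tm}
    (hb : b.vars = ∅) (hbC : ∀ c ∈ C, b ∈ c.1) (N : ℕ) :
    IsSolution ((towerSubst b N).restrict (sysVars C)) C := by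
  refine ⟨fun x hx => ?_, fun x hx => if_neg hx, fun c hc => ?_⟩
  · rw [Subst.restrict, if_pos hx, towerSubst, vars_tower, hb]
  obtain ⟨x, hx⟩ : ∃ x, c.2 = var x := by
    have := hsolved c hc; revert this; cases c.2 <;> simp [IsVar]
  have hxC : x ∈ sysVars C :=
    Finset.le_sup (f := fun c : Cst => setVars c.1 ∪ c.2.vars) hc (by simp [hx, vars])
  rw [hx, subst, Subst.restrict, if_pos hxC]
  refine deduce_tower (Deduce.ax ?_) _
  exact Finset.mem_image.mpr ⟨b, hbC c hc, subst_of_vars_eq_empty hb _⟩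

theorem exists_depth_bound (ds : List (Tm × Tm)) :
    ∃ N, ∀ p ∈ ds, p.1.depth < N ∧ p.2.depth < N := by
  let size : Tm × Tm → ℕ := fun p => p.1.depth + p.2.depth
  refine ⟨(ds.map size).sum + 1, fun p hp => ?_⟩
  have : p.1.depth + p.2.depth ≤ (ds.map size).sum := List.le_sum_of_mem (List.mem_map_of_mem hp)
  omega

/-- independence of disequations: a solved deducibility constraint
system always has a solution satisfying any finite set of syntactically nontrivial
disequations over its variables. -/
theorem independence_of_disequations (C : Finset Cst) (hC : IsCS C)
    (hsolved : Solved C) (ds : List (Tm × Tm))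
    (hvars : ∀ p ∈ ds, p.1.vars ∪ p.2.vars ⊆ sysVars C)
    (hne : ∀ p ∈ ds, p.1 ≠ p.2) :
    ∃ θ : Subst, IsSolution θ C ∧ ∀ p ∈ ds, p.1.subst θ ≠ p.2.subst θ := by
  obtain ⟨b, hb, hbC⟩ := hC.exists_ground_mem_lhs
  obtain ⟨N, hN⟩ := exists_depth_bound ds
  refine ⟨_, isSolution_restrict_towerSubst hsolved hb hbC N, fun p hp heq => hne p hp ?_⟩
  rw [subst_restrict_of_vars_subset (Finset.union_subset_left (hvars p hp)),
    subst_restrict_of_vars_subset (Finset.union_subset_right (hvars p hp))] at heq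
  exact eq_of_subst_eq (fun _ _ => eq_var_of_towerSubst_eq_subst) (hN p hp).1 (hN p hp).2 heq
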